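/- Let L be a real holomorphic line bundle on a real curve (Σ,τ) with invariant divisor D = Σᵢ mᵢ pᵢ (i.e., τ(D) = D). A fixed circle C ⊂ Σ^τ is odd for L (L^{τ_L}|_C is a Möbius bundle) if and only if Σ_{pᵢ ∈ C} mᵢ ≡ 1 mod 2. Consequently, the total degree of L is congruent mod 2 to the number of odd circles plus the contribution from points off Σ^τ, which is even; hence deg(L) ≡ (number of odd circles of L) mod 2. -/

import Mathlib

open scoped Classical

/-! Modulo 2 the points off the fixed locus cancel in conjugate pairs, since `τ` pairs them up
and `D` takes equal values on a pair. What remains is the sum over the fixed points, which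
splits along the circles, and each circle contributes the parity of its own multiplicity. -/

open Finset Function

theorem Finset.sum_filter_not_isFixedPt_eq_zero {α R : Type*} [Semiring R] [CharP R 2]
    {τ : α → α} (hτ : Involutive τ) {s : Finset α} (hs : ∀ p ∈ s, τ p ∈ s)
    {f : α → R} (hf : ∀ p, f (τ p) = f p) :
    ∑ p ∈ s with τ p ≠ p, f p = 0 :=
  sum_involution (fun p _ => τ p)
    (fun p _ => by rw [hf]; exact CharTwo.add_self_eq_zero _)
    (fun _ hp _ => (mem_filter.mp hp).2)
    (fun p hp => by
      obtain ⟨hps, hpτ⟩ := mem_filter.mp hp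
      exact mem_filter.mpr ⟨hs p hps, by rwa [hτ p, ne_comm]⟩)
    (fun p _ => hτ p)

theorem Finset.sum_filter_mem_iUnion {α ι M : Type*} [Fintype ι] [AddCommMonoid M]
    (s : Finset α) {t : ι → Set α} (ht : Pairwise (Disjoint on t)) (f : α → M) :
    ∑ p ∈ s with p ∈ ⋃ i, t i, f p = ∑ i, ∑ p ∈ s with p ∈ t i, f p := by
  have hbiUnion : s.filter (· ∈ ⋃ i, t i) = univ.biUnion fun i => s.filter (· ∈ t i) := by
    ext p
    simp only [mem_filter, Set.mem_iUnion, mem_biUnion, mem_univ, true_and]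
    exact ⟨fun ⟨hp, i, hi⟩ => ⟨i, hp, hi⟩, fun ⟨i, hp, hi⟩ => ⟨hp, i, hi⟩⟩
  rw [hbiUnion, sum_biUnion]
  intro i _ j _ hij
  exact disjoint_filter_filter' _ _ (ht hij)

theorem CharTwo.sum_intCast_eq_card_filter_odd {ι R : Type*} [Ring R] [CharP R 2]
    (s : Finset ι) (g : ι → ℤ) :
    ∑ i ∈ s, (g i : R) = #{i ∈ s | ¬ 2 ∣ g i} := by
  rw [← sum_boole]
  refine sum_congr rfl fun i _ => ?_
  simp only [CharTwo.intCast_eq_ite, even_iff_two_dvd, ite_not]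

/-- For a real holomorphic line bundle `L = 𝒪(D)` on a real curve, given by a `τ`-invariant
divisor `D`, a fixed circle `C` of `τ` is odd for `L` iff `∑_{pᵢ ∈ C} mᵢ` is odd; the degree
of `L` is congruent mod 2 to the number of odd circles. Model: `τ` an involution, `D` a
finitely supported `ℤ`-valued divisor with `τ(D) = D`, and `Circ i` the components (circles)
of the fixed point set of `τ`. -/
theorem degree_mod_two_eq_odd_circles {S ι : Type*} [Fintype ι]
    (τ : S → S) (hτ : ∀ p, τ (τ p) = p)
    (D : S →₀ ℤ) (hD : ∀ p, D (τ p) = D p)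
    (Circ : ι → Set S)
    (hdisj : ∀ i j, i ≠ j → Disjoint (Circ i) (Circ j))
    (hcover : (⋃ i, Circ i) = {p | τ p = p}) :
    (D.sum fun _ m => m) % 2 =
      (((Finset.univ : Finset ι).filter
        (fun i => ¬ (2 ∣ ∑ p ∈ D.support.filter (· ∈ Circ i), D p))).card : ℤ) % 2 := by
  have hsupport : ∀ p ∈ D.support, τ p ∈ D.support := fun p hp => by
    rwa [Finsupp.mem_support_iff, hD, ← Finsupp.mem_support_iff]
  have hfixed : D.support.filter (fun p => τ p = p) = D.support.filter (· ∈ ⋃ i, Circ i) := by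
    simp only [hcover, Set.mem_ofPred_eq]
  refine (ZMod.intCast_eq_intCast_iff' _ _ 2).mp ?_
  calc ((D.sum fun _ m => m : ℤ) : ZMod 2)
      = ∑ p ∈ D.support with τ p = p, (D p : ZMod 2)
          + ∑ p ∈ D.support with τ p ≠ p, (D p : ZMod 2) := by
        rw [sum_filter_add_sum_filter_not, Finsupp.sum, Int.cast_sum]
    _ = ∑ i, ((∑ p ∈ D.support with p ∈ Circ i, D p : ℤ) : ZMod 2) := by
        rw [sum_filter_not_isFixedPt_eq_zero hτ hsupport (fun p => by rw [hD]), add_zero,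
          hfixed, sum_filter_mem_iUnion _ hdisj]
        simp only [Int.cast_sum]
    _ = _ := by
        rw [CharTwo.sum_intCast_eq_card_filter_odd, Int.cast_natCast]
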